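/- As n → ∞ through integers with n ≡ 0 or 3 (mod 4), the middle coefficient S(n) of the expansion of (1+x)(1+x²)···(1+x^n) satisfies S(n) ~ √(6/π) · 2^n · n^{-3/2}, i.e., the ratio S(n)/(√(6/π)·2^n n^{-3/2}) tends to 1. -/

import Mathlib

/-!
Evaluating `∏ (1 + X ^ k)` on the unit circle, `1 + e^{2ikx} = 2 cos (kx) e^{ikx}` turns the middle
coefficient into `S(n) = 2^(n+1)/π · ∫₀^{π/2} ∏ₖ cos (k x) dx`.

Near `0`, with `x = t / n^{3/2}`, we have `log ∏ cos (k x) ≈ -(x²/2) ∑ k² ≈ -t²/6`, and a Gaussian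
majorant holds for `x ≤ 1/(2n)`; by dominated convergence `n^{3/2}` times the integral over
`[0, 1/(2n)]` tends to `∫₀^∞ exp (-t²/6) dt = √(6π)/2`. On `[1/(2n), π/2]` the product is
`exp (-Ω(n^{1/4}))`: for `x ≤ n^{-1/4}` already its first `⌊1/(2x)⌋` factors are that small, and for
larger `x` consecutive factors pair up as `|cos a cos (a + x)| ≤ (1 + cos x)/2 ≤ exp (-x²/π²)`.
-/

open Real Finset Filter Topology MeasureTheory

section ProdCos

theorem cos_le_exp_neg_sq_div_two_add_pow_four {x : ℝ} (hx : |x| ≤ 1) :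
    cos x ≤ exp (-(x ^ 2 / 2) + x ^ 4) := by
  have h := (abs_le.1 (cos_bound hx)).2
  rw [Even.pow_abs (by decide)] at h
  linarith [add_one_le_exp (-(x ^ 2 / 2) + x ^ 4), pow_nonneg (sq_nonneg x) 2, pow_mul x 2 2]

theorem pow_four_le_sq_div_four {x : ℝ} (hx : |x| ≤ 1 / 2) : x ^ 4 ≤ x ^ 2 / 4 := by
  have hx2 : x ^ 2 ≤ 1 / 4 := by nlinarith [sq_abs x, abs_nonneg x]
  nlinarith [sq_nonneg x]

theorem exp_neg_sq_div_two_sub_pow_four_le_cos {x : ℝ} (hx : |x| ≤ 1 / 2) :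
    exp (-(x ^ 2 / 2) - x ^ 4) ≤ cos x := by
  have hx4 := pow_four_le_sq_div_four hx
  have hx2 : x ^ 2 ≤ 1 / 4 := by nlinarith [sq_abs x, abs_nonneg x]
  obtain ⟨y, hy⟩ : ∃ y, y = x ^ 2 / 2 + x ^ 4 := ⟨_, rfl⟩
  have hy0 : 0 ≤ y := by rw [hy]; positivity
  have hy2 : y ^ 2 ≤ x ^ 4 := by
    have : y ≤ x ^ 2 := by linarith
    nlinarith
  -- `exp (-y) ≤ 1 - y + y ^ 2 ≤ 1 - x ^ 2 / 2`
  have hexp := (abs_le.1 (abs_exp_sub_one_sub_id_le (x := -y)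
    (by rw [abs_neg, abs_of_nonneg hy0]; linarith))).2
  rw [show -(x ^ 2 / 2) - x ^ 4 = -y by rw [hy]; ring]
  nlinarith [one_sub_sq_div_two_le_cos (x := x)]

variable {ι : Type*} {s : Finset ι} {x : ι → ℝ}

theorem exp_le_prod_cos (hx : ∀ i ∈ s, |x i| ≤ 1 / 2) :
    exp (-(∑ i ∈ s, x i ^ 2) / 2 - ∑ i ∈ s, x i ^ 4) ≤ ∏ i ∈ s, cos (x i) := by
  rw [← sum_neg_distrib, sum_div, ← sum_sub_distrib, exp_sum]
  refine prod_le_prod (fun i _ => (exp_pos _).le) fun i hi => ?_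
  rw [neg_div]
  exact exp_neg_sq_div_two_sub_pow_four_le_cos (hx i hi)

theorem prod_cos_le_exp (hx : ∀ i ∈ s, |x i| ≤ 1 / 2) :
    ∏ i ∈ s, cos (x i) ≤ exp (-(∑ i ∈ s, x i ^ 2) / 2 + ∑ i ∈ s, x i ^ 4) := by
  rw [← sum_neg_distrib, sum_div, ← sum_add_distrib, exp_sum]
  refine prod_le_prod (fun i hi => ?_) fun i hi => ?_
  · exact (exp_pos _).le.trans (exp_neg_sq_div_two_sub_pow_four_le_cos (hx i hi))
  · rw [neg_div]
    exact cos_le_exp_neg_sq_div_two_add_pow_four ((hx i hi).trans (by norm_num))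

theorem abs_prod_cos_le_exp (hx : ∀ i ∈ s, |x i| ≤ 1 / 2) :
    |∏ i ∈ s, cos (x i)| ≤ exp (-(∑ i ∈ s, x i ^ 2) / 4) := by
  rw [abs_of_nonneg ((exp_pos _).le.trans (exp_le_prod_cos hx))]
  have h4 : ∑ i ∈ s, x i ^ 4 ≤ (∑ i ∈ s, x i ^ 2) / 4 := by
    rw [sum_div]
    exact sum_le_sum fun i hi => pow_four_le_sq_div_four (hx i hi)
  exact (prod_cos_le_exp hx).trans (exp_le_exp.2 (by linarith))

end ProdCos

theorem tendsto_prod_cos {α ι : Type*} {l : Filter α} {s : α → Finset ι} {x : α → ι → ℝ}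
    {ε : α → ℝ} {σ : ℝ} (hε : Tendsto ε l (𝓝 0)) (hx : ∀ a, ∀ i ∈ s a, |x a i| ≤ ε a)
    (hσ : Tendsto (fun a => ∑ i ∈ s a, x a i ^ 2) l (𝓝 σ)) :
    Tendsto (fun a => ∏ i ∈ s a, cos (x a i)) l (𝓝 (exp (-σ / 2))) := by
  have hquartic : Tendsto (fun a => ∑ i ∈ s a, x a i ^ 4) l (𝓝 0) := by
    have hbound : ∀ a, ∑ i ∈ s a, x a i ^ 4 ≤ ε a ^ 2 * ∑ i ∈ s a, x a i ^ 2 := fun a => by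
      rw [mul_sum]
      refine sum_le_sum fun i hi => ?_
      have : x a i ^ 2 ≤ ε a ^ 2 := by
        rw [← sq_abs]
        exact pow_le_pow_left₀ (abs_nonneg _) (hx a i hi) 2
      nlinarith [sq_nonneg (x a i)]
    have hlim := (hε.pow 2).mul hσ
    rw [zero_pow two_ne_zero, zero_mul] at hlim
    exact squeeze_zero (fun a => sum_nonneg fun i _ => by positivity) hbound hlim
  have hsmall : ∀ᶠ a in l, ∀ i ∈ s a, |x a i| ≤ 1 / 2 :=
    (hε.eventually (ge_mem_nhds (by norm_num))).mono fun a ha i hi => (hx a i hi).trans ha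
  refine tendsto_of_tendsto_of_tendsto_of_le_of_le' ?_ ?_ (hsmall.mono fun a => exp_le_prod_cos)
    (hsmall.mono fun a => prod_cos_le_exp)
  · simpa using ((hσ.neg.div_const 2).sub hquartic).rexp
  · simpa using ((hσ.neg.div_const 2).add hquartic).rexp

theorem sum_Icc_sq (n : ℕ) :
    ∑ k ∈ Icc 1 n, (k : ℝ) ^ 2 = n * (n + 1) * (2 * n + 1) / 6 := by
  induction n with
  | zero => simp
  | succ n ih =>
    rw [sum_Icc_succ_top (by omega), ih]
    push_cast
    ring

theorem cube_div_three_le_sum_Icc_sq (n : ℕ) :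
    (n : ℝ) ^ 3 / 3 ≤ ∑ k ∈ Icc 1 n, (k : ℝ) ^ 2 := by
  rw [sum_Icc_sq]
  have : (0 : ℝ) ≤ n := n.cast_nonneg
  nlinarith

theorem tendsto_sum_Icc_sq_div_cube :
    Tendsto (fun n : ℕ => (∑ k ∈ Icc 1 n, (k : ℝ) ^ 2) / n ^ 3) atTop (𝓝 (1 / 3)) := by
  have h := ((tendsto_const_nhds (x := (1 : ℝ))).add tendsto_one_div_atTop_nhds_zero_nat).mul
    ((tendsto_const_nhds (x := (2 : ℝ))).add tendsto_one_div_atTop_nhds_zero_nat) |>.div_const 6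
  norm_num at h
  refine h.congr' ((eventually_ne_atTop 0).mono fun n hn => ?_)
  dsimp only
  rw [sum_Icc_sq]
  field_simp

noncomputable def cosProd (n : ℕ) (x : ℝ) : ℝ := ∏ k ∈ Icc 1 n, cos (k * x)

theorem continuous_cosProd (n : ℕ) : Continuous (cosProd n) :=
  continuous_finsetProd _ fun _ _ => by fun_prop

theorem cosProd_neg (n : ℕ) (x : ℝ) : cosProd n (-x) = cosProd n x := by
  simp [cosProd]

theorem cosProd_succ (n : ℕ) (x : ℝ) :
    cosProd (n + 1) x = cosProd n x * cos ((n + 1) * x) := by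
  rw [cosProd, cosProd, prod_Icc_succ_top (by omega)]
  push_cast
  rfl

theorem antitone_abs_cosProd (x : ℝ) : Antitone fun n => |cosProd n x| :=
  antitone_nat_of_succ_le fun n => by
    rw [cosProd_succ, abs_mul]
    exact mul_le_of_le_one_right (abs_nonneg _) (abs_cos_le_one _)

theorem abs_cosProd_le_exp_of_mul_le_half {n : ℕ} {x : ℝ} (hx : 0 ≤ x) (hnx : n * x ≤ 1 / 2) :
    |cosProd n x| ≤ exp (-(x ^ 2 * n ^ 3 / 12)) := by
  have hsmall : ∀ k ∈ Icc 1 n, |(k : ℝ) * x| ≤ 1 / 2 := fun k hk => by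
    rw [abs_of_nonneg (by positivity)]
    exact le_trans (mul_le_mul_of_nonneg_right (by exact_mod_cast (mem_Icc.1 hk).2) hx) hnx
  refine (abs_prod_cos_le_exp hsmall).trans (exp_le_exp.2 ?_)
  simp_rw [mul_pow, ← sum_mul]
  nlinarith [cube_div_three_le_sum_Icc_sq n, sq_nonneg x]

theorem abs_cos_mul_cos_add_le (a : ℝ) {x : ℝ} (hx : |x| ≤ π / 2) :
    |cos a * cos (a + x)| ≤ exp (-(x ^ 2 / π ^ 2)) := by
  have hprod : cos a * cos (a + x) = (cos x + cos (2 * a + x)) / 2 := by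
    rw [cos_add_cos, show (x + (2 * a + x)) / 2 = a + x by ring,
      show (x - (2 * a + x)) / 2 = -a by ring, cos_neg]
    ring
  have hcos : 0 ≤ cos x := cos_nonneg_of_mem_Icc (abs_le.1 hx)
  have hquad : cos x ≤ 1 - 2 * (x ^ 2 / π ^ 2) := by
    have := cos_le_one_sub_mul_cos_sq (hx.trans (by linarith [pi_pos]))
    rwa [div_mul_eq_mul_div, mul_div_assoc] at this
  rw [hprod, abs_le]
  constructor <;> linarith [neg_one_le_cos (2 * a + x), cos_le_one (2 * a + x),
    add_one_le_exp (-(x ^ 2 / π ^ 2))]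

theorem abs_cosProd_le_exp_of_abs_le_pi_div_two (n : ℕ) {x : ℝ} (hx : |x| ≤ π / 2) :
    |cosProd n x| ≤ exp (-((n / 2 : ℕ) * x ^ 2 / π ^ 2)) := by
  induction n using Nat.twoStepInduction with
  | zero => simp [cosProd]
  | one => simpa [cosProd] using abs_cos_le_one x
  | more n ih _ =>
    have hpair := abs_cos_mul_cos_add_le ((n + 1) * x) hx
    rw [cosProd_succ, cosProd_succ, mul_assoc, abs_mul, show (n + 2) / 2 = n / 2 + 1 by omega]
    calc _ ≤ exp (-((n / 2 : ℕ) * x ^ 2 / π ^ 2)) * exp (-(x ^ 2 / π ^ 2)) := by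
          refine mul_le_mul ih (le_of_eq_of_le ?_ hpair) (abs_nonneg _) (exp_pos _).le
          push_cast
          ring_nf
      _ = _ := by
          rw [← exp_add]
          push_cast
          ring_nf

theorem abs_cosProd_tail_le {n : ℕ} {u x : ℝ} (hu : 2 ≤ u) (hun : u ^ 3 ≤ n)
    (hx : 1 ≤ 2 * n * x) (hxπ : x ≤ π / 2) : |cosProd n x| ≤ exp (-(u / 768)) := by
  have hn : (8 : ℝ) ≤ n := le_trans (by nlinarith [pow_le_pow_left₀ (by norm_num) hu 3]) hun
  have hx0 : 0 < x := by nlinarith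
  rcases le_or_gt (u * x) 1 with hux | hux
  · -- only the first `m = ⌊1/(2x)⌋` factors are used
    set m := ⌊1 / (2 * x)⌋₊
    have hm_le : (m : ℝ) ≤ 1 / (2 * x) := Nat.floor_le (by positivity)
    have hm_ge : 1 ≤ 4 * x * m := by
      have h1 : 1 / (2 * x) - 1 < m := Nat.sub_one_lt_floor _
      have h2 : 1 ≤ 1 / (2 * x) := by rw [le_div_iff₀ (by positivity)]; nlinarith
      have h3 : (1 : ℝ) ≤ m := by exact_mod_cast Nat.le_floor (by exact_mod_cast h2)
      have h4 : 1 / (2 * x) * (2 * x) = 1 := by field_simp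
      nlinarith
    have hmn : m ≤ n := by
      have : 1 / (2 * x) ≤ n := by rw [div_le_iff₀ (by positivity)]; linarith
      exact_mod_cast hm_le.trans this
    have hmx : m * x ≤ 1 / 2 :=
      calc m * x ≤ 1 / (2 * x) * x := mul_le_mul_of_nonneg_right hm_le hx0.le
        _ = 1 / 2 := by field_simp
    calc |cosProd n x| ≤ |cosProd m x| := antitone_abs_cosProd x hmn
      _ ≤ exp (-(x ^ 2 * m ^ 3 / 12)) := abs_cosProd_le_exp_of_mul_le_half hx0.le hmx
      _ ≤ exp (-(u / 768)) := by
        refine exp_le_exp.2 (neg_le_neg ?_)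
        -- `64 x³ m³ ≥ 1 ≥ u x`
        have h64 : 1 ≤ 64 * x ^ 3 * m ^ 3 := by nlinarith [one_le_pow₀ (n := 3) hm_ge]
        have : u ≤ 64 * x ^ 2 * m ^ 3 := by nlinarith
        linarith
  · calc |cosProd n x| ≤ exp (-((n / 2 : ℕ) * x ^ 2 / π ^ 2)) :=
          abs_cosProd_le_exp_of_abs_le_pi_div_two n (abs_le.2 ⟨by linarith [pi_pos], hxπ⟩)
      _ ≤ exp (-(u / 768)) := by
        refine exp_le_exp.2 (neg_le_neg ?_)
        have hhalf : (n : ℝ) ≤ 4 * (n / 2 : ℕ) := by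
          have : 2 ≤ n := by exact_mod_cast (show (2 : ℝ) ≤ n by linarith)
          exact_mod_cast (by omega : n ≤ 4 * (n / 2))
        have hπ : π ^ 2 ≤ 16 := by nlinarith [pi_pos, pi_le_four]
        have hux2 : 1 ≤ u ^ 2 * x ^ 2 := by nlinarith
        rw [le_div_iff₀ (by positivity)]
        nlinarith

theorem abs_integral_cosProd_tail_le {n : ℕ} {u : ℝ} (hu : 2 ≤ u) (hun : u ^ 3 ≤ n) :
    |∫ x in 1 / (2 * n)..π / 2, cosProd n x| ≤ π / 2 * exp (-(u / 768)) := by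
  have hn : (8 : ℝ) ≤ n := le_trans (by nlinarith [pow_le_pow_left₀ (by norm_num) hu 3]) hun
  have hab : 1 / (2 * n) ≤ π / 2 := by
    rw [div_le_iff₀ (by positivity)]
    nlinarith [pi_gt_three]
  have h := intervalIntegral.norm_integral_le_of_norm_le_const (C := exp (-(u / 768)))
    (f := cosProd n) (a := 1 / (2 * n)) (b := π / 2) fun x hx => by
      rw [Set.uIoc_of_le hab] at hx
      refine abs_cosProd_tail_le hu hun ?_ hx.2
      have := (div_lt_iff₀ (by positivity)).1 hx.1
      linarith
  rw [abs_of_nonneg (sub_nonneg.2 hab)] at h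
  refine h.trans ?_
  rw [mul_comm]
  gcongr
  exact sub_le_self _ (by positivity)

theorem tendsto_integral_cosProd_tail :
    Tendsto (fun n : ℕ => n * √n * ∫ x in 1 / (2 * n)..π / 2, cosProd n x) atTop (𝓝 0) := by
  have hu : Tendsto (fun n : ℕ => √√(n : ℝ)) atTop atTop :=
    tendsto_sqrt_atTop.comp (tendsto_sqrt_atTop.comp tendsto_natCast_atTop_atTop)
  have hdecay : Tendsto (fun u => π / 2 * 768 ^ 6 * ((u / 768) ^ 6 * exp (-(u / 768)))) atTop
      (𝓝 0) := by
    simpa using ((tendsto_pow_mul_exp_neg_atTop_nhds_zero 6).comp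
      (tendsto_id.atTop_div_const (by norm_num : (0 : ℝ) < 768))).const_mul (π / 2 * 768 ^ 6)
  refine squeeze_zero_norm' ?_ (hdecay.comp hu)
  filter_upwards [eventually_ge_atTop 16] with n hn
  -- with `u = n^(1/4)`, the prefactor `n √n` is `u ^ 6`
  obtain ⟨u, hu⟩ : ∃ u, u = √√(n : ℝ) := ⟨_, rfl⟩
  have hsq : √(n : ℝ) = u ^ 2 := by rw [hu, sq_sqrt (sqrt_nonneg _)]
  have hn4 : (n : ℝ) = u ^ 4 := by
    rw [show u ^ 4 = (u ^ 2) ^ 2 by ring, ← hsq, sq_sqrt n.cast_nonneg]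
  have hu2 : 2 ≤ u := by
    rw [hu, le_sqrt' two_pos, le_sqrt' (by norm_num)]
    norm_num
    exact_mod_cast hn
  rw [Function.comp_apply, ← hu, norm_mul, hsq, Real.norm_eq_abs, Real.norm_eq_abs,
    abs_of_nonneg (by positivity)]
  calc n * u ^ 2 * |∫ x in 1 / (2 * (n : ℝ))..π / 2, cosProd n x|
      ≤ n * u ^ 2 * (π / 2 * exp (-(u / 768))) := by
        gcongr
        exact abs_integral_cosProd_tail_le hu2
          (hn4 ▸ pow_le_pow_right₀ (by linarith) (by norm_num))
    _ = _ := by rw [hn4]; ring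

theorem tendsto_cosProd_div_mul_sqrt (t : ℝ) :
    Tendsto (fun n : ℕ => cosProd n (t / (n * √n))) atTop (𝓝 (exp (-(t ^ 2 / 6)))) := by
  have hε : Tendsto (fun n : ℕ => |t| / √n) atTop (𝓝 0) :=
    tendsto_const_nhds.div_atTop (tendsto_sqrt_atTop.comp tendsto_natCast_atTop_atTop)
  have hx : ∀ n : ℕ, ∀ k ∈ Icc 1 n, |(k : ℝ) * (t / (n * √n))| ≤ |t| / √n := fun n k hk => by
    have hkn : (k : ℝ) ≤ n := by exact_mod_cast (mem_Icc.1 hk).2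
    rw [show (k : ℝ) * (t / (n * √n)) = k / n * (t / √n) by ring, abs_mul, abs_div, abs_div,
      abs_of_nonneg (sqrt_nonneg _), Nat.abs_cast, Nat.abs_cast]
    exact mul_le_of_le_one_left (by positivity) (div_le_one_of_le₀ hkn n.cast_nonneg)
  have hσ : Tendsto (fun n : ℕ => ∑ k ∈ Icc 1 n, ((k : ℝ) * (t / (n * √n))) ^ 2) atTop
      (𝓝 (t ^ 2 / 3)) := by
    have h := tendsto_sum_Icc_sq_div_cube.const_mul (t ^ 2)
    rw [← mul_div_assoc, mul_one] at h
    refine h.congr' ((eventually_ne_atTop 0).mono fun n hn => ?_)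
    have hn' : (0 : ℝ) < n := by positivity
    simp_rw [mul_pow, ← sum_mul, div_pow, mul_pow, sq_sqrt hn'.le]
    ring
  have h := tendsto_prod_cos hε hx hσ
  rwa [show -(t ^ 2 / 3) / 2 = -(t ^ 2 / 6) by ring] at h

theorem abs_cosProd_div_mul_sqrt_le {n : ℕ} (hn : n ≠ 0) {t : ℝ}
    (ht : t ∈ Set.Ioc 0 (√n / 2)) : |cosProd n (t / (n * √n))| ≤ exp (-(t ^ 2 / 12)) := by
  have hn' : (0 : ℝ) < n := by positivity
  have hs : 0 < √(n : ℝ) := sqrt_pos.2 hn'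
  have hnx : n * (t / (n * √n)) = t / √n := by field_simp
  have h := abs_cosProd_le_exp_of_mul_le_half (n := n) (x := t / (n * √n))
    (div_nonneg ht.1.le (by positivity)) (by rw [hnx, div_le_iff₀ hs]; linarith [ht.2])
  convert h using 4
  field_simp
  rw [sq_sqrt hn'.le]

theorem mul_sqrt_mul_integral_cosProd_eq {n : ℕ} (hn : n ≠ 0) :
    n * √n * ∫ x in 0..1 / (2 * n), cosProd n x
      = ∫ t, (Set.Ioc 0 (√n / 2)).indicator (fun t => cosProd n (t / (n * √n))) t := by
  have hc : (n : ℝ) * √n ≠ 0 := by positivity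
  rw [integral_indicator measurableSet_Ioc, ← intervalIntegral.integral_of_le (by positivity),
    intervalIntegral.integral_comp_div (cosProd n) hc, zero_div, smul_eq_mul,
    show √n / 2 / (n * √n) = 1 / (2 * n) by field_simp]

theorem tendsto_integral_cosProd_central :
    Tendsto (fun n : ℕ => n * √n * ∫ x in 0..1 / (2 * n), cosProd n x) atTop
      (𝓝 (√(6 * π) / 2)) := by
  have hgauss : ∫ t, (Set.Ioi 0).indicator (fun t => exp (-(t ^ 2 / 6))) t = √(6 * π) / 2 := by
    rw [integral_indicator measurableSet_Ioi]
    convert integral_gaussian_Ioi (1 / 6) using 3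
    · ring_nf
    · field_simp
  rw [← hgauss]
  refine (tendsto_integral_filter_of_dominated_convergence
    ((Set.Ioi 0).indicator fun t => exp (-(1 / 12) * t ^ 2)) ?_ ?_ ?_ ?_).congr'
    ((eventually_ne_atTop 0).mono fun n hn => (mul_sqrt_mul_integral_cosProd_eq hn).symm)
  · exact Eventually.of_forall fun n =>
      (((continuous_cosProd n).comp (continuous_id.div_const _)).aestronglyMeasurable).indicator
        measurableSet_Ioc
  · refine (eventually_ne_atTop 0).mono fun n hn => ae_of_all _ fun t => ?_
    by_cases ht : t ∈ Set.Ioc 0 (√n / 2)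
    · rw [Set.indicator_of_mem ht, Set.indicator_of_mem (Set.mem_Ioi.2 ht.1)]
      exact (abs_cosProd_div_mul_sqrt_le hn ht).trans_eq (by ring_nf)
    · rw [Set.indicator_of_notMem ht, norm_zero]
      exact Set.indicator_nonneg (fun _ _ => (exp_pos _).le) _
  · exact (integrable_exp_neg_mul_sq (by norm_num)).indicator measurableSet_Ioi
  · refine ae_of_all _ fun t => ?_
    rcases le_or_gt t 0 with ht | ht
    · simp [ht]
    · have hmem : ∀ᶠ n : ℕ in atTop, t ∈ Set.Ioc 0 (√n / 2) :=
        (((tendsto_sqrt_atTop.comp tendsto_natCast_atTop_atTop).atTop_div_const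
          two_pos).eventually_ge_atTop t).mono fun n hn => ⟨ht, hn⟩
      rw [Set.indicator_of_mem (Set.mem_Ioi.2 ht)]
      exact (tendsto_cosProd_div_mul_sqrt t).congr'
        (hmem.mono fun n hn => (Set.indicator_of_mem hn _).symm)

theorem tendsto_integral_cosProd :
    Tendsto (fun n : ℕ => n * √n * ∫ x in 0..π / 2, cosProd n x) atTop
      (𝓝 (√(6 * π) / 2)) := by
  have h := tendsto_integral_cosProd_central.add tendsto_integral_cosProd_tail
  rw [add_zero] at h
  refine h.congr fun n => ?_
  rw [← mul_add, intervalIntegral.integral_add_adjacent_intervals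
    ((continuous_cosProd n).intervalIntegrable _ _) ((continuous_cosProd n).intervalIntegrable _ _)]

theorem Polynomial.integral_eval_exp_mul_I_eq_coeff (p : Polynomial ℂ) (N : ℕ) :
    ∫ θ in -π..π, p.eval (Complex.exp (θ * Complex.I)) * Complex.exp (-(N * θ * Complex.I))
      = 2 * π * p.coeff N := by
  have : Fact (0 < 2 * π) := ⟨two_pi_pos⟩
  have hπ : (π : ℂ) ≠ 0 := by exact_mod_cast pi_ne_zero
  rw [← p.fourierCoeff_toAddCircle_natCast, fourierCoeff_eq_intervalIntegral _ _ (-π),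
    show -π + 2 * π = π by ring]
  simp_rw [fourier_coe_apply]
  simp only [one_div, mul_inv_rev, Int.cast_neg, Int.cast_natCast, mul_neg, neg_mul,
    Complex.ofReal_mul, Complex.ofReal_ofNat, Polynomial.toAddCircle,
    Polynomial.aeval_continuousMap_apply, ContinuousMap.coe_mk, smul_eq_mul, Complex.real_smul,
    Complex.ofReal_inv]
  field_simp
  congr 1 with θ
  rw [mul_comm]
  congr 2
  · ring
  · simp [AddCircle.toCircle_apply_mk, Circle.coe_exp]

theorem integral_neg_to_eq_two_mul_of_even {f : ℝ → ℝ} (hf : Continuous f)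
    (heven : ∀ x, f (-x) = f x) (a : ℝ) : ∫ x in -a..a, f x = 2 * ∫ x in 0..a, f x := by
  rw [← intervalIntegral.integral_add_adjacent_intervals (b := 0) (hf.intervalIntegrable _ _)
    (hf.intervalIntegrable _ _), ← neg_zero, ← intervalIntegral.integral_comp_neg, neg_zero]
  simp only [heven]
  ring

theorem one_add_exp_two_mul_I (x : ℝ) :
    1 + Complex.exp (2 * x * Complex.I) = 2 * cos x * Complex.exp (x * Complex.I) := by
  rw [Complex.ofReal_cos, Complex.cos, mul_div_cancel₀ _ two_ne_zero, add_mul, ← Complex.exp_add,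
    ← Complex.exp_add]
  ring_nf
  rw [Complex.exp_zero]
  ring

theorem prod_one_add_exp_two_mul_I_pow (n : ℕ) (x : ℝ) :
    ∏ k ∈ Icc 1 n, (1 + Complex.exp (2 * x * Complex.I) ^ k)
      = 2 ^ n * cosProd n x * Complex.exp (n * (n + 1) / 2 * x * Complex.I) := by
  induction n with
  | zero => simp [cosProd]
  | succ n ih =>
    rw [prod_Icc_succ_top (by omega), ih, ← Complex.exp_nat_mul, cosProd_succ,
      show (n + 1 : ℕ) * (2 * x * Complex.I) = 2 * ((n + 1) * x : ℝ) * Complex.I by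
        push_cast; ring,
      one_add_exp_two_mul_I,
      show ((n + 1 : ℕ) : ℂ) * ((n + 1 : ℕ) + 1) / 2 * x * Complex.I
        = n * (n + 1) / 2 * x * Complex.I + ((n + 1) * x : ℝ) * Complex.I by push_cast; ring,
      Complex.exp_add]
    push_cast
    ring

theorem coeff_prod_one_add_X_pow_mul_pi {n : ℕ} (hn : 4 ∣ n * (n + 1)) :
    ((∏ k ∈ Icc 1 n, (1 + Polynomial.X ^ k : Polynomial ℤ)).coeff (n * (n + 1) / 4) : ℝ) * π
      = 2 ^ (n + 1) * ∫ x in 0..π / 2, cosProd n x := by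
  set N := n * (n + 1) / 4
  have hN : (n : ℂ) * (n + 1) = 4 * N := by exact_mod_cast (Nat.mul_div_cancel' hn).symm
  set p := (∏ k ∈ Icc 1 n, (1 + Polynomial.X ^ k : Polynomial ℤ)).map (Int.castRingHom ℂ)
  have heval : ∀ θ : ℝ,
      p.eval (Complex.exp (θ * Complex.I)) * Complex.exp (-(N * θ * Complex.I))
        = ((2 ^ n * cosProd n (θ / 2) : ℝ) : ℂ) := fun θ => by
    simp only [p, Polynomial.map_prod, Polynomial.eval_prod, Polynomial.map_add,
      Polynomial.map_one, Polynomial.map_pow, Polynomial.map_X, Polynomial.eval_add,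
      Polynomial.eval_one, Polynomial.eval_pow, Polynomial.eval_X, Complex.ofReal_mul,
      Complex.ofReal_pow, Complex.ofReal_ofNat]
    rw [show (θ : ℂ) = 2 * (θ / 2 : ℝ) by push_cast; ring, prod_one_add_exp_two_mul_I_pow,
      mul_assoc, ← Complex.exp_add,
      show (n : ℂ) * (n + 1) / 2 * (θ / 2 : ℝ) * Complex.I + -(N * (2 * (θ / 2 : ℝ)) * Complex.I)
        = 0 by linear_combination ((θ / 2 : ℝ) * Complex.I / 2) * hN,
      Complex.exp_zero, mul_one]
  have hfold : ∫ θ in -π..π, 2 ^ n * cosProd n (θ / 2)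
      = 2 ^ (n + 2) * ∫ x in 0..π / 2, cosProd n x := by
    rw [intervalIntegral.integral_const_mul, intervalIntegral.integral_comp_div (cosProd n)
      two_ne_zero, neg_div, integral_neg_to_eq_two_mul_of_even (continuous_cosProd n)
      (cosProd_neg n), smul_eq_mul]
    ring
  have h := p.integral_eval_exp_mul_I_eq_coeff N
  simp_rw [heval, intervalIntegral.integral_ofReal, hfold, p, Polynomial.coeff_map,
    eq_intCast] at h
  have h' : (2 ^ (n + 2) * ∫ x in 0..π / 2, cosProd n x : ℝ)
      = 2 * π * ((∏ k ∈ Icc 1 n, (1 + Polynomial.X ^ k : Polynomial ℤ)).coeff N : ℝ) := by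
    exact_mod_cast h
  linear_combination (-1 / 2 : ℝ) * h'

theorem stmt_17 :
    Tendsto (fun n : ℕ =>
        ((∏ k ∈ Finset.Icc 1 n, ((1 : Polynomial ℤ) + Polynomial.X ^ k)).coeff
            (n * (n + 1) / 4) : ℝ) /
          (Real.sqrt (6 / π) * 2 ^ n * (n : ℝ) ^ (-(3 : ℝ) / 2)))
      (atTop ⊓ Filter.principal {n : ℕ | n % 4 = 0 ∨ n % 4 = 3}) (nhds 1) := by
  have hsqrt : √(6 / π) * π = √(6 * π) := by
    rw [← sqrt_sq pi_pos.le, ← sqrt_mul (by positivity), sqrt_sq pi_pos.le]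
    congr 1
    field_simp
  have hlim := (tendsto_integral_cosProd.const_mul (2 / √(6 * π))).mono_left
    (inf_le_left (b := Filter.principal {n : ℕ | n % 4 = 0 ∨ n % 4 = 3}))
  rw [div_mul_div_comm, mul_comm 2, div_self (by positivity)] at hlim
  refine hlim.congr' ?_
  filter_upwards [mem_inf_of_right (mem_principal_self _), mem_inf_of_left (eventually_ne_atTop 0)]
    with n hn hn0
  have h4 : 4 ∣ n * (n + 1) := by
    apply Nat.dvd_of_mod_eq_zero
    rcases hn with h | h <;> simp [Nat.mul_mod, Nat.add_mod, h]
  have hpos : (0 : ℝ) < n := by positivity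
  have hrpow : (n : ℝ) ^ (-(3 : ℝ) / 2) = (n * √n)⁻¹ := by
    rw [neg_div, rpow_neg hpos.le, show (3 : ℝ) / 2 = 1 + 1 / 2 by norm_num, rpow_add hpos,
      rpow_one, ← sqrt_eq_rpow]
  have hS := coeff_prod_one_add_X_pow_mul_pi h4
  rw [← eq_div_iff pi_ne_zero] at hS
  rw [hS, hrpow, ← hsqrt]
  field_simp
  ring
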